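/- Let α ∈ ℝ, let σ be the exponential linear unit σ(x) = α(e^x − 1) for x ≤ 0 and σ(x) = x for x > 0, set γ := max{1 + 4|α|, 2 + |α|}, and define B(x,h) := (σ(x + h) − 2σ(x) + σ(x − h))/γ. Let 𝔅 : ℝⁿ → ℝ be the n-fold composition 𝔅(x₁) := B(x₁,1), 𝔅(x₁,…,x_n) := B(x_n, 𝔅(x₁,…,x_{n−1})). Then ∫_{ℝⁿ} |𝔅(x)| dx ≤ 1; in particular 𝔅 ∈ L¹(ℝⁿ). -/

import Mathlib

/-!
Write `g_h = σ(· + h) - 2σ + σ(· - h)`. Since `σ` is `max 1 |α|`-Lipschitz, `|g_h| ≤ γ |h|`.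
Splitting the line at `-h, 0, h`, `g_h` is an exact multiple of `exp` on `(-∞, -h]`, is bounded by
affine functions on `[-h, 0]` and `[0, h]`, and vanishes on `(h, ∞)`; this gives
`∫ |g_h| ≤ (1 + 4|α|) h² ≤ γ |h|` for `|h| ≤ 1`. Hence `B(·, h)` has sup norm and `L¹` norm at most
`|h|`, and by Fubini `∫ |B(t, F(y))| dt dy ≤ ∫ |F|` for every `F` with `|F| ≤ 1`, so the iterates
stay in the unit balls of `L^∞` and `L¹`.
-/

open MeasureTheory Real Set

noncomputable def elu (α x : ℝ) : ℝ := if x ≤ 0 then α * (exp x - 1) else x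

def secondDiff (f : ℝ → ℝ) (h x : ℝ) : ℝ := f (x + h) - 2 * f x + f (x - h)

lemma secondDiff_neg (f : ℝ → ℝ) (h : ℝ) : secondDiff f (-h) = secondDiff f h := by
  ext x
  simp only [secondDiff, sub_neg_eq_add, ← sub_eq_add_neg]
  ring

lemma abs_secondDiff_le {f : ℝ → ℝ} {K : NNReal} (hf : LipschitzWith K f) (h x : ℝ) :
    |secondDiff f h x| ≤ 2 * K * |h| := by
  have h₁ := hf.dist_le_mul (x + h) x
  have h₂ := hf.dist_le_mul x (x - h)
  simp only [Real.dist_eq, add_sub_cancel_left, sub_sub_cancel] at h₁ h₂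
  calc |secondDiff f h x| = |(f (x + h) - f x) - (f x - f (x - h))| := by
        rw [secondDiff]; ring_nf
    _ ≤ |f (x + h) - f x| + |f x - f (x - h)| := abs_sub _ _
    _ ≤ 2 * K * |h| := by linarith

lemma continuous_secondDiff {f : ℝ → ℝ} (hf : Continuous f) :
    Continuous fun p : ℝ × ℝ => secondDiff f p.2 p.1 := by
  unfold secondDiff; fun_prop

lemma exp_sub_exp_le_of_nonpos {a b : ℝ} (hab : a ≤ b) (hb : b ≤ 0) :
    exp b - exp a ≤ b - a := by
  have h₁ : exp a = exp b * exp (a - b) := by rw [← exp_add]; ring_nf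
  have h₂ := add_one_le_exp (a - b)
  have h₃ : exp (a - b) ≤ 1 := exp_le_one_iff.2 (by linarith)
  have h₄ : exp b ≤ 1 := exp_le_one_iff.2 hb
  nlinarith [exp_pos b]

lemma exp_add_exp_neg_sub_two_mul_exp_neg_le_sq {h : ℝ} (h0 : 0 ≤ h) :
    (exp h + exp (-h) - 2) * exp (-h) ≤ h ^ 2 := by
  have h₁ : exp h * exp (-h) = 1 := by rw [← exp_add, add_neg_cancel, exp_zero]
  have h₂ : exp (-h) ≤ 1 := exp_le_one_iff.2 (by linarith)
  have h₃ := add_one_le_exp (-h)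
  nlinarith

lemma integral_affine (c d a b : ℝ) :
    ∫ x in a..b, (c * x + d) = c * (b ^ 2 - a ^ 2) / 2 + d * (b - a) := by
  rw [intervalIntegral.integral_add (Continuous.intervalIntegrable (by fun_prop) _ _)
    intervalIntegrable_const, intervalIntegral.integral_const_mul, integral_id,
    intervalIntegral.integral_const, smul_eq_mul]
  ring

section Elu

variable (α : ℝ) {h x : ℝ}

lemma elu_of_nonpos (hx : x ≤ 0) : elu α x = α * (exp x - 1) := if_pos hx

lemma elu_of_nonneg (hx : 0 ≤ x) : elu α x = x := by
  rcases hx.eq_or_lt with rfl | hx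
  · simp [elu]
  · exact if_neg hx.not_ge

lemma abs_elu_le_of_nonpos (hx : x ≤ 0) : |elu α x| ≤ |α| * -x := by
  have h₁ : exp x ≤ 1 := exp_le_one_iff.2 hx
  have h₂ := add_one_le_exp x
  rw [elu_of_nonpos α hx, abs_mul, abs_of_nonpos (a := exp x - 1) (by linarith)]
  exact mul_le_mul_of_nonneg_left (by linarith) (abs_nonneg α)

lemma lipschitzWith_elu : LipschitzWith (max 1 ‖α‖₊) (elu α) := by
  refine LipschitzWith.of_dist_le_mul fun a b => ?_
  simp only [NNReal.coe_max, NNReal.coe_one, coe_nnnorm, Real.norm_eq_abs, Real.dist_eq]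
  wlog hab : a ≤ b generalizing a b
  · rw [abs_sub_comm, abs_sub_comm a]; exact this b a (le_of_not_ge hab)
  rw [abs_sub_comm, abs_sub_comm a, abs_of_nonneg (sub_nonneg.2 hab)]
  have hM₁ : 1 ≤ max 1 |α| := le_max_left _ _
  have hMα : |α| ≤ max 1 |α| := le_max_right _ _
  rcases le_or_gt b 0 with hb | hb
  · rw [elu_of_nonpos α hb, elu_of_nonpos α (hab.trans hb), ← mul_sub, sub_sub_sub_cancel_right,
      abs_mul, abs_of_nonneg (sub_nonneg.2 (exp_le_exp.2 hab))]
    exact mul_le_mul hMα (exp_sub_exp_le_of_nonpos hab hb) (sub_nonneg.2 (exp_le_exp.2 hab))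
      (by positivity)
  rcases le_or_gt a 0 with ha | ha
  · rw [elu_of_nonneg α hb.le]
    calc |b - elu α a| ≤ |b| + |elu α a| := abs_sub _ _
      _ ≤ b + |α| * -a := by rw [abs_of_pos hb]; linarith [abs_elu_le_of_nonpos α ha]
      _ ≤ max 1 |α| * (b - a) := by nlinarith
  · rw [elu_of_nonneg α hb.le, elu_of_nonneg α ha.le, abs_of_nonneg (by linarith)]
    nlinarith

lemma continuous_elu : Continuous (elu α) := (lipschitzWith_elu α).continuous

lemma secondDiff_elu_of_le_neg (h0 : 0 ≤ h) (hx : x ≤ -h) :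
    secondDiff (elu α) h x = α * (exp h + exp (-h) - 2) * exp x := by
  rw [secondDiff, elu_of_nonpos α (by linarith), elu_of_nonpos α (by linarith),
    elu_of_nonpos α (by linarith), add_comm x, sub_eq_neg_add x, exp_add, exp_add]
  ring

lemma abs_secondDiff_elu_le_of_mem_Icc_neg (hx : x ∈ Icc (-h) 0) :
    |secondDiff (elu α) h x| ≤ x + h + |α| * (h - 3 * x) := by
  obtain ⟨hx₁, hx₂⟩ := hx
  have e₁ := abs_elu_le_of_nonpos α hx₂
  have e₂ := abs_elu_le_of_nonpos α (show x - h ≤ 0 by linarith)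
  rw [secondDiff, elu_of_nonneg α (by linarith)]
  calc |x + h - 2 * elu α x + elu α (x - h)| ≤ |x + h| + 2 * |elu α x| + |elu α (x - h)| := by
        have := abs_add_le (x + h - 2 * elu α x) (elu α (x - h))
        have := abs_sub (x + h) (2 * elu α x)
        rw [abs_mul, abs_two] at this
        linarith
    _ ≤ x + h + |α| * (h - 3 * x) := by rw [abs_of_nonneg (by linarith)]; linarith

lemma abs_secondDiff_elu_le_of_mem_Icc (hx : x ∈ Icc 0 h) :
    |secondDiff (elu α) h x| ≤ (1 + |α|) * (h - x) := by
  obtain ⟨hx₁, hx₂⟩ := hx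
  have e := abs_elu_le_of_nonpos α (show x - h ≤ 0 by linarith)
  rw [secondDiff, elu_of_nonneg α (by linarith), elu_of_nonneg α hx₁]
  calc |x + h - 2 * x + elu α (x - h)| ≤ |h - x| + |elu α (x - h)| := by
        rw [show x + h - 2 * x = h - x by ring]; exact abs_add_le _ _
    _ ≤ (1 + |α|) * (h - x) := by rw [abs_of_nonneg (by linarith)]; linarith

lemma secondDiff_elu_of_lt (h0 : 0 ≤ h) (hx : h < x) : secondDiff (elu α) h x = 0 := by
  rw [secondDiff, elu_of_nonneg α (by linarith), elu_of_nonneg α (by linarith),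
    elu_of_nonneg α (by linarith)]
  ring

lemma integrable_secondDiff_elu_of_nonneg (h0 : 0 ≤ h) : Integrable (secondDiff (elu α) h) := by
  have left : IntegrableOn (secondDiff (elu α) h) (Iic (-h)) :=
    IntegrableOn.congr_fun ((integrableOn_exp_Iic (-h)).const_mul _)
      (fun x hx => (secondDiff_elu_of_le_neg α h0 hx).symm) measurableSet_Iic
  have mid : IntegrableOn (secondDiff (elu α) h) (Ioc (-h) h) :=
    ((continuous_secondDiff (continuous_elu α)).comp
      (continuous_id.prodMk continuous_const)).integrableOn_Ioc
  have right : IntegrableOn (secondDiff (elu α) h) (Ioi h) :=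
    integrableOn_zero.congr_fun (fun x hx => (secondDiff_elu_of_lt α h0 hx).symm) measurableSet_Ioi
  rw [← integrableOn_univ, ← Iic_union_Ioi (a := -h), ← Ioc_union_Ioi_eq_Ioi (by linarith)]
  exact left.union (mid.union right)

lemma integrable_secondDiff_elu (h : ℝ) : Integrable (secondDiff (elu α) h) := by
  rcases le_total 0 h with h0 | h0
  · exact integrable_secondDiff_elu_of_nonneg α h0
  · simpa only [secondDiff_neg] using integrable_secondDiff_elu_of_nonneg α (neg_nonneg.2 h0)

lemma setIntegral_Iic_abs_secondDiff_elu_le (h0 : 0 ≤ h) :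
    ∫ x in Iic (-h), |secondDiff (elu α) h x| ≤ |α| * h ^ 2 := by
  have hc : 0 ≤ exp h + exp (-h) - 2 := by
    linarith [add_one_le_exp h, add_one_le_exp (-h)]
  calc ∫ x in Iic (-h), |secondDiff (elu α) h x|
      = ∫ x in Iic (-h), |α| * (exp h + exp (-h) - 2) * exp x := by
        refine setIntegral_congr_fun measurableSet_Iic fun x hx => ?_
        rw [secondDiff_elu_of_le_neg α h0 hx, abs_mul, abs_mul, abs_of_nonneg hc, abs_exp]
    _ = |α| * ((exp h + exp (-h) - 2) * exp (-h)) := by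
        rw [integral_const_mul, integral_exp_Iic, mul_assoc]
    _ ≤ |α| * h ^ 2 :=
        mul_le_mul_of_nonneg_left (exp_add_exp_neg_sub_two_mul_exp_neg_le_sq h0) (abs_nonneg α)

lemma intervalIntegral_abs_secondDiff_elu_le (h0 : 0 ≤ h) :
    ∫ x in -h..h, |secondDiff (elu α) h x| ≤ (1 + 3 * |α|) * h ^ 2 := by
  have hi : ∀ a b, IntervalIntegrable (fun x => |secondDiff (elu α) h x|) volume a b :=
    fun _ _ => (integrable_secondDiff_elu α h).abs.intervalIntegrable
  have neg : ∫ x in -h..0, |secondDiff (elu α) h x| ≤ (1 / 2 + 5 / 2 * |α|) * h ^ 2 :=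
    calc ∫ x in -h..0, |secondDiff (elu α) h x|
        ≤ ∫ x in -h..0, ((1 - 3 * |α|) * x + (1 + |α|) * h) :=
          intervalIntegral.integral_mono_on (by linarith) (hi _ _)
            (Continuous.intervalIntegrable (by fun_prop) _ _) fun x hx =>
              (abs_secondDiff_elu_le_of_mem_Icc_neg α hx).trans_eq (by ring)
      _ = (1 / 2 + 5 / 2 * |α|) * h ^ 2 := by rw [integral_affine]; ring
  have pos : ∫ x in 0..h, |secondDiff (elu α) h x| ≤ (1 + |α|) / 2 * h ^ 2 :=
    calc ∫ x in 0..h, |secondDiff (elu α) h x|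
        ≤ ∫ x in 0..h, (-(1 + |α|) * x + (1 + |α|) * h) :=
          intervalIntegral.integral_mono_on h0 (hi _ _)
            (Continuous.intervalIntegrable (by fun_prop) _ _) fun x hx =>
              (abs_secondDiff_elu_le_of_mem_Icc α hx).trans_eq (by ring)
      _ = (1 + |α|) / 2 * h ^ 2 := by rw [integral_affine]; ring
  rw [← intervalIntegral.integral_add_adjacent_intervals (hi _ _) (hi _ _)]
  linarith

lemma integral_abs_secondDiff_elu_le_of_nonneg (h0 : 0 ≤ h) :
    ∫ x, |secondDiff (elu α) h x| ≤ (1 + 4 * |α|) * h ^ 2 := by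
  have hi : Integrable fun x => |secondDiff (elu α) h x| := (integrable_secondDiff_elu α h).abs
  have right : ∫ x in Ioi h, |secondDiff (elu α) h x| = 0 :=
    setIntegral_eq_zero_of_forall_eq_zero fun x hx => by
      rw [secondDiff_elu_of_lt α h0 hx, abs_zero]
  rw [← intervalIntegral.integral_Iic_add_Ioi hi.integrableOn hi.integrableOn,
    ← intervalIntegral.integral_interval_add_Ioi hi.integrableOn hi.integrableOn (b := h), right,
    add_zero]
  linarith [setIntegral_Iic_abs_secondDiff_elu_le α h0, intervalIntegral_abs_secondDiff_elu_le α h0]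

lemma integral_abs_secondDiff_elu_le (h : ℝ) :
    ∫ x, |secondDiff (elu α) h x| ≤ (1 + 4 * |α|) * h ^ 2 := by
  rcases le_total 0 h with h0 | h0
  · exact integral_abs_secondDiff_elu_le_of_nonneg α h0
  · simpa only [secondDiff_neg, neg_sq] using
      integral_abs_secondDiff_elu_le_of_nonneg α (neg_nonneg.2 h0)

end Elu

structure InUnitBalls {E : Type*} [MeasurableSpace E] (μ : Measure E) (F : E → ℝ) : Prop where
  measurable : Measurable F
  abs_le_one : ∀ y, |F y| ≤ 1
  integrable : Integrable F μ
  integral_abs_le_one : ∫ y, |F y| ∂μ ≤ 1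

lemma inUnitBalls_one {E : Type*} [MeasurableSpace E] (μ : Measure E) [IsProbabilityMeasure μ] :
    InUnitBalls μ fun _ => 1 where
  measurable := measurable_const
  abs_le_one _ := abs_one.le
  integrable := integrable_const 1
  integral_abs_le_one := by simp

lemma InUnitBalls.comp_measurePreserving {E E' : Type*} [MeasurableSpace E] [MeasurableSpace E']
    {μ : Measure E} {μ' : Measure E'} {F : E → ℝ} (hF : InUnitBalls μ F) {e : E' → E}
    (he : MeasurePreserving e μ' μ) : InUnitBalls μ' (F ∘ e) where
  measurable := hF.measurable.comp he.measurable
  abs_le_one y := hF.abs_le_one (e y)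
  integrable := he.integrable_comp_of_integrable hF.integrable
  integral_abs_le_one := by
    have := hF.integral_abs_le_one
    rwa [← he.map_eq, integral_map he.measurable.aemeasurable
      hF.measurable.abs.aestronglyMeasurable] at this

structure IsContractiveKernel (B : ℝ → ℝ → ℝ) : Prop where
  measurable : Measurable (Function.uncurry B)
  abs_le : ∀ x h, |B x h| ≤ |h|
  integrable : ∀ h, |h| ≤ 1 → Integrable (B · h)
  integral_abs_le : ∀ h, |h| ≤ 1 → ∫ x, |B x h| ≤ |h|

lemma isContractiveKernel_elu (α : ℝ) {γ : ℝ} (hγ₁ : 1 + 4 * |α| ≤ γ)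
    (hγ₂ : 2 * max 1 |α| ≤ γ) : IsContractiveKernel fun x h => secondDiff (elu α) h x / γ := by
  have hγ : 0 < γ := by linarith [le_max_left 1 |α|]
  refine ⟨((continuous_secondDiff (continuous_elu α)).div_const γ).measurable, fun x h => ?_,
    fun h _ => (integrable_secondDiff_elu α h).div_const γ, fun h hh => ?_⟩
  · rw [abs_div, abs_of_pos hγ, div_le_iff₀ hγ]
    calc |secondDiff (elu α) h x| ≤ 2 * max 1 |α| * |h| := by
          simpa using abs_secondDiff_le (lipschitzWith_elu α) h x
      _ ≤ |h| * γ := by nlinarith [abs_nonneg h]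
  · simp only [abs_div, abs_of_pos hγ]
    rw [integral_div, div_le_iff₀ hγ]
    have hsq : h ^ 2 ≤ |h| := by nlinarith [sq_abs h, abs_nonneg h]
    calc ∫ x, |secondDiff (elu α) h x| ≤ (1 + 4 * |α|) * h ^ 2 :=
          integral_abs_secondDiff_elu_le α h
      _ ≤ |h| * γ := by nlinarith [abs_nonneg α, sq_nonneg h]

namespace IsContractiveKernel

variable {B : ℝ → ℝ → ℝ} (hB : IsContractiveKernel B) {E : Type*} [MeasurableSpace E]
  {ν : Measure E} [SFinite ν] {F : E → ℝ}
include hB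

lemma measurable_comp (hF : Measurable F) :
    Measurable fun p : ℝ × E => B p.1 (F p.2) :=
  hB.measurable.comp (measurable_fst.prodMk (hF.comp measurable_snd))

lemma integrable_comp (hF : InUnitBalls ν F) :
    Integrable (fun p : ℝ × E => B p.1 (F p.2)) (volume.prod ν) := by
  have hm := hB.measurable_comp hF.measurable
  refine (integrable_prod_iff' hm.aestronglyMeasurable).2
    ⟨ae_of_all _ fun y => hB.integrable _ (hF.abs_le_one y), ?_⟩
  refine hF.integrable.abs.mono'
    hm.stronglyMeasurable.norm.integral_prod_left'.aestronglyMeasurable (ae_of_all _ fun y => ?_)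
  rw [Real.norm_of_nonneg (integral_nonneg fun _ => norm_nonneg _)]
  exact hB.integral_abs_le _ (hF.abs_le_one y)

lemma integral_abs_comp_le (hF : InUnitBalls ν F) :
    ∫ p, |B p.1 (F p.2)| ∂(volume.prod ν) ≤ ∫ y, |F y| ∂ν := by
  rw [integral_prod_symm _ (hB.integrable_comp hF).abs]
  exact integral_mono (hB.integrable_comp hF).abs.integral_prod_right hF.integrable.abs
    fun y => hB.integral_abs_le _ (hF.abs_le_one y)

lemma inUnitBalls_comp (hF : InUnitBalls ν F) :
    InUnitBalls (volume.prod ν) fun p : ℝ × E => B p.1 (F p.2) where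
  measurable := hB.measurable_comp hF.measurable
  abs_le_one _ := (hB.abs_le _ _).trans (hF.abs_le_one _)
  integrable := hB.integrable_comp hF
  integral_abs_le_one := (hB.integral_abs_comp_le hF).trans hF.integral_abs_le_one

lemma inUnitBalls_snoc {m : ℕ} {F : (Fin m → ℝ) → ℝ} (hF : InUnitBalls volume F) :
    InUnitBalls volume fun x : Fin (m + 1) → ℝ => B (x (Fin.last m)) (F (Fin.init x)) := by
  have he := volume_preserving_piFinSuccAbove (fun _ : Fin (m + 1) => ℝ) (Fin.last m)
  rw [Measure.volume_eq_prod] at he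
  have hG : (fun x : Fin (m + 1) → ℝ => B (x (Fin.last m)) (F (Fin.init x))) =
      (fun p : ℝ × (Fin m → ℝ) => B p.1 (F p.2)) ∘
        MeasurableEquiv.piFinSuccAbove (fun _ => ℝ) (Fin.last m) := by
    ext x
    simp [MeasurableEquiv.piFinSuccAbove_apply]
  rw [hG]
  exact (hB.inUnitBalls_comp hF).comp_measurePreserving he

lemma inUnitBalls_iterate (𝓑 : (m : ℕ) → (Fin m → ℝ) → ℝ)
    (h1 : ∀ x : Fin 1 → ℝ, 𝓑 1 x = B (x 0) 1)
    (hstep : ∀ (m : ℕ) (x : Fin (m + 2) → ℝ),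
      𝓑 (m + 2) x = B (x (Fin.last (m + 1))) (𝓑 (m + 1) (Fin.init x))) :
    ∀ m, InUnitBalls volume (𝓑 (m + 1))
  | 0 => by
    -- `𝓑 1` is the step applied to the constant `1` on the one-point space `Fin 0 → ℝ`.
    rw [funext h1]
    have : IsProbabilityMeasure (volume : Measure (Fin 0 → ℝ)) := ⟨Measure.pi_empty_univ _⟩
    exact hB.inUnitBalls_snoc (inUnitBalls_one _)
  | m + 1 => by
    rw [funext (hstep m)]
    exact hB.inUnitBalls_snoc (inUnitBalls_iterate 𝓑 h1 hstep m)

end IsContractiveKernel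

/-- The `n`-fold composition of the (normalized) ELU `B`-function has `L¹` norm at most `1`
on `ℝⁿ`; in particular it is integrable. -/
theorem stmt_13 (n : ℕ) (hn : 1 ≤ n) (α : ℝ) (σ : ℝ → ℝ)
    (hσ : ∀ x : ℝ, σ x = if x ≤ 0 then α * (Real.exp x - 1) else x)
    (γ : ℝ) (hγ : γ = max (1 + 4 * |α|) (2 + |α|))
    (B : ℝ → ℝ → ℝ)
    (hB : ∀ x h : ℝ, B x h = (σ (x + h) - 2 * σ x + σ (x - h)) / γ)
    (𝓑 : (m : ℕ) → (Fin m → ℝ) → ℝ)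
    (h1 : ∀ x : Fin 1 → ℝ, 𝓑 1 x = B (x 0) 1)
    (hstep : ∀ (m : ℕ) (x : Fin (m + 2) → ℝ),
      𝓑 (m + 2) x = B (x (Fin.last (m + 1))) (𝓑 (m + 1) (Fin.init x))) :
    (∫ x : Fin n → ℝ, |𝓑 n x|) ≤ 1 ∧ Integrable (𝓑 n) := by
  obtain rfl : σ = elu α := funext hσ
  obtain rfl : B = fun x h => secondDiff (elu α) h x / γ := funext₂ hB
  have hγ₂ : 2 * max 1 |α| ≤ γ := by
    rw [hγ, mul_max_of_nonneg _ _ zero_le_two]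
    exact max_le (le_max_of_le_right (by linarith [abs_nonneg α]))
      (le_max_of_le_left (by linarith [abs_nonneg α]))
  have hB := isContractiveKernel_elu α (hγ ▸ le_max_left _ _) hγ₂
  obtain ⟨m, rfl⟩ : ∃ m, n = m + 1 := ⟨n - 1, by omega⟩
  have h𝓑 := hB.inUnitBalls_iterate 𝓑 h1 hstep m
  exact ⟨h𝓑.integral_abs_le_one, h𝓑.integrable⟩
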